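/- arXiv:2312.06784 — 2 statements merged into one kernel-verified Lean document; each statement's English description precedes it below -/
import Mathlib

section
/- Let Q(ℓ,w), 0 ≤ w ≤ ℓ, be a family of row-stochastic real 𝒥×𝒥 matrices (nonnegative entries, every row summing to 1), and let Π be the matrices produced by the recursion from Q. Then every Π(k,w) has nonnegative entries, and for every integer k ≥ 0 and every i ∈ 𝒥, Σ_{w=0}^{k} Σ_{j∈𝒥} Π_{ij}(k,w) = 1. If the Q(ℓ,w) are only row-substochastic, then the same sum is at most 1. -/
open scoped BigOperators

noncomputable section

/-- The diagonal part of a matrix. -/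
def diagPart {J : Type*} [DecidableEq J] (M : Matrix J J ℝ) : Matrix J J ℝ :=
  Matrix.of fun i j => if i = j then M i j else 0

/-- The off-diagonal part of a matrix. -/
def offdiagPart {J : Type*} [DecidableEq J] (M : Matrix J J ℝ) : Matrix J J ℝ :=
  M - diagPart M

/-- A matrix is row-substochastic if its entries are nonnegative and every row sum is ≤ 1. -/
def RowSubstochastic {J : Type*} [Fintype J] (M : Matrix J J ℝ) : Prop :=
  (∀ i j, 0 ≤ M i j) ∧ ∀ i, ∑ j, M i j ≤ 1

/-- A matrix is row-stochastic if its entries are nonnegative and every row sum equals 1. -/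
def RowStochastic {J : Type*} [Fintype J] (M : Matrix J J ℝ) : Prop :=
  (∀ i j, 0 ≤ M i j) ∧ ∀ i, ∑ j, M i j = 1

/-- The matrices `Π(k,v)` produced by the recursion from the family `Q(ℓ,w)`. -/
def PiRec {J : Type*} [Fintype J] [DecidableEq J]
    (Q : ℕ → ℕ → Matrix J J ℝ) : ℕ → ℕ → Matrix J J ℝ
  | 0, v => if v = 0 then 1 else 0
  | (k+1), v =>
      if v = 0 then ∑ k' ∈ Finset.range (k+1), PiRec Q k k' * offdiagPart (Q k k')
      else if v ≤ k + 1 then PiRec Q k (v-1) * diagPart (Q k (v-1)) else 0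

lemma diagPart_nonneg {J : Type*} [DecidableEq J] {M : Matrix J J ℝ}
    (h : ∀ i j, 0 ≤ M i j) (i j : J) : 0 ≤ diagPart M i j := by
  simp only [diagPart, Matrix.of_apply]
  split_ifs <;> simp [h i j]

lemma offdiagPart_nonneg {J : Type*} [DecidableEq J] {M : Matrix J J ℝ}
    (h : ∀ i j, 0 ≤ M i j) (i j : J) : 0 ≤ offdiagPart M i j := by
  simp only [offdiagPart, diagPart, Matrix.sub_apply, Matrix.of_apply]
  split_ifs <;> simp [h i j]

lemma diag_add_offdiag {J : Type*} [DecidableEq J] (M : Matrix J J ℝ) :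
    diagPart M + offdiagPart M = M := by
  simp [offdiagPart]

lemma rowsum_mul {J : Type*} [Fintype J] (A B : Matrix J J ℝ) (i : J) :
    ∑ j, (A * B) i j = ∑ m, A i m * ∑ j, B m j := by
  simp only [Matrix.mul_apply, Finset.mul_sum]
  exact Finset.sum_comm

lemma piRec_nonneg {J : Type*} [Fintype J] [DecidableEq J]
    (Q : ℕ → ℕ → Matrix J J ℝ)
    (hQ : ∀ ℓ w, w ≤ ℓ → RowSubstochastic (Q ℓ w)) :
    ∀ k w (i j : J), 0 ≤ PiRec Q k w i j := by
  intro k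
  induction k with
  | zero =>
    intro w i j
    rw [PiRec]
    split_ifs with h
    · rw [Matrix.one_apply]; split_ifs <;> norm_num
    · simp
  | succ k ih =>
    intro w i j
    rw [PiRec]
    split_ifs with h1 h2
    · rw [Matrix.sum_apply]
      refine Finset.sum_nonneg fun k' hk' => ?_
      rw [Matrix.mul_apply]
      refine Finset.sum_nonneg fun m _ => mul_nonneg (ih _ _ _) ?_
      exact offdiagPart_nonneg (hQ k k' (Nat.lt_succ_iff.mp (Finset.mem_range.mp hk'))).1 _ _
    · rw [Matrix.mul_apply]
      refine Finset.sum_nonneg fun m _ => mul_nonneg (ih _ _ _) ?_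
      have hw : w - 1 ≤ k := by omega
      exact diagPart_nonneg (hQ k (w-1) hw).1 _ _
    · simp

lemma mass_step {J : Type*} [Fintype J] [DecidableEq J]
    (Q : ℕ → ℕ → Matrix J J ℝ) (k : ℕ) (i : J) :
    ∑ w ∈ Finset.range (k+2), ∑ j, PiRec Q (k+1) w i j
      = ∑ v ∈ Finset.range (k+1), ∑ m, PiRec Q k v i m * ∑ j, Q k v m j := by
  rw [Finset.sum_range_succ']
  have h0 : ∑ j, PiRec Q (k+1) 0 i j
      = ∑ v ∈ Finset.range (k+1), ∑ j, (PiRec Q k v * offdiagPart (Q k v)) i j := by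
    rw [show PiRec Q (k+1) 0
        = ∑ k' ∈ Finset.range (k+1), PiRec Q k k' * offdiagPart (Q k k') from by rw [PiRec]; simp]
    simp [Matrix.sum_apply]
    exact Finset.sum_comm
  have h1 : ∀ v ∈ Finset.range (k+1), ∑ j, PiRec Q (k+1) (v+1) i j
      = ∑ j, (PiRec Q k v * diagPart (Q k v)) i j := by
    intro v hv
    have hv' : v + 1 ≤ k + 1 := Nat.succ_le_succ (Nat.lt_succ_iff.mp (Finset.mem_range.mp hv))
    rw [show PiRec Q (k+1) (v+1) = PiRec Q k v * diagPart (Q k v) from by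
      rw [PiRec]; simp [hv']]
  rw [h0, Finset.sum_congr rfl h1, ← Finset.sum_add_distrib]
  refine Finset.sum_congr rfl fun v hv => ?_
  rw [rowsum_mul, rowsum_mul, ← Finset.sum_add_distrib]
  refine Finset.sum_congr rfl fun m _ => ?_
  rw [← mul_add, ← Finset.sum_add_distrib]
  congr 1
  refine Finset.sum_congr rfl fun j _ => ?_
  have := congrFun (congrFun (diag_add_offdiag (Q k v)) m) j
  simpa [Matrix.add_apply] using this

theorem Pi_recursion_substochastic_mass
    {J : Type*} [Fintype J] [DecidableEq J] [Nonempty J]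
    (Q : ℕ → ℕ → Matrix J J ℝ)
    (hQ : ∀ ℓ w, w ≤ ℓ → RowSubstochastic (Q ℓ w)) :
    (∀ k w (i j : J), 0 ≤ PiRec Q k w i j) ∧
    (∀ k (i : J), ∑ w ∈ Finset.range (k+1), ∑ j, PiRec Q k w i j ≤ 1) ∧
    ((∀ ℓ w, w ≤ ℓ → RowStochastic (Q ℓ w)) →
      ∀ k (i : J), ∑ w ∈ Finset.range (k+1), ∑ j, PiRec Q k w i j = 1) := by
  have hnn := piRec_nonneg Q hQ
  have hbase : ∀ i : J, ∑ w ∈ Finset.range 1, ∑ j, PiRec Q 0 w i j = 1 := by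
    intro i
    simp [PiRec, Matrix.one_apply]
  refine ⟨hnn, ?_, ?_⟩
  · intro k
    induction k with
    | zero => intro i; rw [hbase i]
    | succ k ih =>
      intro i
      rw [mass_step]
      calc ∑ v ∈ Finset.range (k+1), ∑ m, PiRec Q k v i m * ∑ j, Q k v m j
          ≤ ∑ v ∈ Finset.range (k+1), ∑ m, PiRec Q k v i m * 1 := by
            refine Finset.sum_le_sum fun v hv => Finset.sum_le_sum fun m _ => ?_
            exact mul_le_mul_of_nonneg_left
              ((hQ k v (Nat.lt_succ_iff.mp (Finset.mem_range.mp hv))).2 m) (hnn _ _ _ _)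
        _ ≤ 1 := by simpa using ih i
  · intro hst k
    induction k with
    | zero => exact hbase
    | succ k ih =>
      intro i
      rw [mass_step]
      calc ∑ v ∈ Finset.range (k+1), ∑ m, PiRec Q k v i m * ∑ j, Q k v m j
          = ∑ v ∈ Finset.range (k+1), ∑ m, PiRec Q k v i m * 1 := by
            refine Finset.sum_congr rfl fun v hv => Finset.sum_congr rfl fun m _ => ?_
            rw [(hst k v (Nat.lt_succ_iff.mp (Finset.mem_range.mp hv))).2 m]
        _ = 1 := by simpa using ih i

end
end

section
/- Let Q(ℓ,w) and Q̃(ℓ,w), 0 ≤ w ≤ ℓ, be two families of row-substochastic real 𝒥×𝒥 matrices with recursions Π and Π̃, and let C_k be as in the comparison lemma (C_0 = 0 and C_k = sup{ Σ_{j∈𝒥} |Q_{ij}(ℓ,w) − Q̃_{ij}(ℓ,w)| : 0 ≤ w ≤ ℓ ≤ k−1, i ∈ 𝒥 } for k ≥ 1). Then for every γ > 0, every s ≥ 0, every i ∈ 𝒥 and every integer N ≥ 0, Σ_{j∈𝒥} |p^a_{ij}(s) − p̃^a_{ij}(s)| ≤ γ s · C_N + 2 Σ_{ℓ ≥ N+1}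 Poi_{γs}(ℓ). -/
open scoped BigOperators

noncomputable section

/-- `C_k`: `C_0 = 0` and, for `k ≥ 1`,
`C_k = sup { ∑_j |Q_{ij}(ℓ,w) − Q̃_{ij}(ℓ,w)| : 0 ≤ w ≤ ℓ ≤ k−1, i ∈ 𝒥 }`. -/
def Cconst {J : Type*} [Fintype J] (Q Q' : ℕ → ℕ → Matrix J J ℝ) (k : ℕ) : ℝ :=
  sSup {x : ℝ | ∃ ℓ w, ∃ i : J, w ≤ ℓ ∧ ℓ < k ∧ x = ∑ j, |Q ℓ w i j - Q' ℓ w i j|}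

/-- `Poi_λ(k) = e^{−λ} λ^k / k!`. -/
def Poi (lam : ℝ) (k : ℕ) : ℝ := Real.exp (-lam) * lam ^ k / (Nat.factorial k)

/-- `Erl_{k,γ}(x) = γ (γx)^{k−1} e^{−γx} / (k−1)!` (intended for `k ≥ 1`). -/
def Erl (k : ℕ) (γ x : ℝ) : ℝ :=
  γ * (γ * x) ^ (k - 1) * Real.exp (-(γ * x)) / (Nat.factorial (k - 1))

/-- Atomic part of the approximate transition probabilities:
`p^a_{ij}(s) = 1_{i=j} ∑_{ℓ≥0} Poi_{γs}(ℓ) Π_{ii}(ℓ,ℓ)`. -/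
def pAtom {J : Type*} [Fintype J] [DecidableEq J] (γ : ℝ)
    (Pi : ℕ → ℕ → Matrix J J ℝ) (s : ℝ) (i j : J) : ℝ :=
  (if i = j then 1 else 0) * ∑' ℓ : ℕ, Poi (γ * s) ℓ * Pi ℓ ℓ i i

/-- Absolutely continuous part of the approximate transition probabilities:
`p^c_{ij}(s,v) = ∑_{ℓ≥1} ∑_{w=0}^{ℓ−1} Erl_{ℓ−w,γ}(s−v) Poi_{γv}(w) Π_{ij}(ℓ,w)`. -/
def pCont {J : Type*} [Fintype J] (γ : ℝ)
    (Pi : ℕ → ℕ → Matrix J J ℝ) (s v : ℝ) (i j : J) : ℝ :=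
  ∑' ℓ : ℕ, ∑ w ∈ Finset.range ℓ, Erl (ℓ - w) γ (s - v) * Poi (γ * v) w * Pi ℓ w i j


lemma exp_eq_tsum' (x : ℝ) : Real.exp x = ∑' n : ℕ, x ^ n / n.factorial := by
  rw [Real.exp_eq_exp_ℝ]; rw [NormedSpace.exp_eq_tsum_div]

lemma Poi_nonneg {lam : ℝ} (h : 0 ≤ lam) (k : ℕ) : 0 ≤ Poi lam k := by
  unfold Poi; positivity

lemma summable_Poi (lam : ℝ) : Summable (Poi lam) := by
  have := (Real.summable_pow_div_factorial lam).mul_left (Real.exp (-lam))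
  apply this.congr
  intro n; simp [Poi, mul_div_assoc]

lemma tsum_Poi {lam : ℝ} : ∑' k, Poi lam k = 1 := by
  have : ∑' k, Poi lam k = Real.exp (-lam) * ∑' k : ℕ, lam ^ k / k.factorial := by
    rw [← tsum_mul_left]; congr 1; ext k; simp [Poi, mul_div_assoc]
  rw [this, ← exp_eq_tsum', ← Real.exp_add]; simp

lemma Poi_succ_mul (lam : ℝ) (k : ℕ) : Poi lam (k+1) * (k+1) = lam * Poi lam k := by
  unfold Poi
  rw [Nat.factorial_succ]
  push_cast
  field_simp
  ring

lemma abs_prod_sub_prod (a b : ℕ → ℝ) (ha0 : ∀ k, 0 ≤ a k) (ha1 : ∀ k, a k ≤ 1)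
    (hb0 : ∀ k, 0 ≤ b k) (hb1 : ∀ k, b k ≤ 1) (n : ℕ) :
    |∏ k ∈ Finset.range n, a k - ∏ k ∈ Finset.range n, b k| ≤
      ∑ k ∈ Finset.range n, |a k - b k| := by
  induction n with
  | zero => simp
  | succ n ih =>
    rw [Finset.prod_range_succ, Finset.prod_range_succ, Finset.sum_range_succ]
    set A := ∏ k ∈ Finset.range n, a k with hA
    set B := ∏ k ∈ Finset.range n, b k with hB
    have hA0 : 0 ≤ A := Finset.prod_nonneg fun k _ => ha0 k
    have hA1 : A ≤ 1 := Finset.prod_le_one (fun k _ => ha0 k) fun k _ => ha1 k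
    have hbn : |b n| ≤ 1 := abs_le.2 ⟨by linarith [hb0 n], hb1 n⟩
    calc |A * a n - B * b n| = |A * (a n - b n) + (A - B) * b n| := by ring_nf
      _ ≤ |A * (a n - b n)| + |(A - B) * b n| := abs_add_le _ _
      _ = |A| * |a n - b n| + |A - B| * |b n| := by rw [abs_mul, abs_mul]
      _ ≤ 1 * |a n - b n| + |A - B| * 1 := by
          gcongr
          · exact abs_le.2 ⟨by linarith, hA1⟩
      _ ≤ ∑ k ∈ Finset.range n, |a k - b k| + |a n - b n| := by
          rw [one_mul, mul_one]; linarith [ih]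

lemma diagPart_eq {J : Type*} [DecidableEq J] (M : Matrix J J ℝ) :
    diagPart M = Matrix.diagonal (fun i => M i i) := by
  ext i j
  by_cases h : i = j <;> simp [diagPart, Matrix.diagonal, h]

lemma piRec_diag {J : Type*} [Fintype J] [DecidableEq J] (Q : ℕ → ℕ → Matrix J J ℝ) (ℓ : ℕ) :
    PiRec Q ℓ ℓ = Matrix.diagonal (fun i => ∏ k ∈ Finset.range ℓ, Q k k i i) := by
  induction ℓ with
  | zero =>
    simp only [PiRec, if_pos rfl, Finset.range_zero, Finset.prod_empty]
    exact Matrix.diagonal_one.symm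
  | succ n ih =>
    show (if n + 1 = 0 then _ else if n + 1 ≤ n + 1 then PiRec Q n n * diagPart (Q n n) else 0) = _
    rw [if_neg (Nat.succ_ne_zero n), if_pos le_rfl]
    rw [ih, diagPart_eq, Matrix.diagonal_mul_diagonal]
    exact congrArg Matrix.diagonal (funext fun i => (Finset.prod_range_succ _ _).symm)

lemma Cconst_bdd {J : Type*} [Fintype J] [DecidableEq J] (Q Q' : ℕ → ℕ → Matrix J J ℝ)
    (hQ : ∀ ℓ w, w ≤ ℓ → RowSubstochastic (Q ℓ w))
    (hQ' : ∀ ℓ w, w ≤ ℓ → RowSubstochastic (Q' ℓ w)) (N : ℕ) :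
    BddAbove {x : ℝ | ∃ ℓ w, ∃ i : J, w ≤ ℓ ∧ ℓ < N ∧ x = ∑ j, |Q ℓ w i j - Q' ℓ w i j|} := by
  refine ⟨2, ?_⟩
  rintro x ⟨ℓ, w, i, hwl, _, rfl⟩
  calc ∑ j, |Q ℓ w i j - Q' ℓ w i j| ≤ ∑ j, (Q ℓ w i j + Q' ℓ w i j) := by
        apply Finset.sum_le_sum
        intro j _
        calc |Q ℓ w i j - Q' ℓ w i j| ≤ |Q ℓ w i j| + |Q' ℓ w i j| :=
              abs_sub (Q ℓ w i j) (Q' ℓ w i j)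
          _ = Q ℓ w i j + Q' ℓ w i j := by
              rw [abs_of_nonneg ((hQ ℓ w hwl).1 i j), abs_of_nonneg ((hQ' ℓ w hwl).1 i j)]
    _ = ∑ j, Q ℓ w i j + ∑ j, Q' ℓ w i j := Finset.sum_add_distrib
    _ ≤ 1 + 1 := add_le_add ((hQ ℓ w hwl).2 i) ((hQ' ℓ w hwl).2 i)
    _ = 2 := by norm_num

lemma Cconst_nonneg {J : Type*} [Fintype J] [DecidableEq J] [Nonempty J]
    (Q Q' : ℕ → ℕ → Matrix J J ℝ)
    (hQ : ∀ ℓ w, w ≤ ℓ → RowSubstochastic (Q ℓ w))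
    (hQ' : ∀ ℓ w, w ≤ ℓ → RowSubstochastic (Q' ℓ w)) (N : ℕ) :
    0 ≤ Cconst Q Q' N := by
  rcases Nat.eq_zero_or_pos N with rfl | hN
  · have : {x : ℝ | ∃ ℓ w, ∃ i : J, w ≤ ℓ ∧ ℓ < 0 ∧ x = ∑ j, |Q ℓ w i j - Q' ℓ w i j|} = ∅ := by
      ext x; simp
    rw [Cconst, this, Real.sSup_empty]
  · obtain ⟨i⟩ := ‹Nonempty J›
    have hmem : (∑ j, |Q 0 0 i j - Q' 0 0 i j|) ∈
        {x : ℝ | ∃ ℓ w, ∃ i : J, w ≤ ℓ ∧ ℓ < N ∧ x = ∑ j, |Q ℓ w i j - Q' ℓ w i j|} :=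
      ⟨0, 0, i, le_rfl, hN, rfl⟩
    have h0 : (0:ℝ) ≤ ∑ j, |Q 0 0 i j - Q' 0 0 i j| :=
      Finset.sum_nonneg fun j _ => abs_nonneg _
    exact h0.trans (le_csSup (Cconst_bdd Q Q' hQ hQ' N) hmem)

lemma le_Cconst {J : Type*} [Fintype J] [DecidableEq J]
    (Q Q' : ℕ → ℕ → Matrix J J ℝ)
    (hQ : ∀ ℓ w, w ≤ ℓ → RowSubstochastic (Q ℓ w))
    (hQ' : ∀ ℓ w, w ≤ ℓ → RowSubstochastic (Q' ℓ w)) {N ℓ w : ℕ} (i : J)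
    (hwl : w ≤ ℓ) (hlN : ℓ < N) :
    |Q ℓ w i i - Q' ℓ w i i| ≤ Cconst Q Q' N := by
  have h1 : |Q ℓ w i i - Q' ℓ w i i| ≤ ∑ j, |Q ℓ w i j - Q' ℓ w i j| :=
    Finset.single_le_sum (f := fun j => |Q ℓ w i j - Q' ℓ w i j|)
      (fun j _ => abs_nonneg _) (Finset.mem_univ i)
  exact h1.trans (le_csSup (Cconst_bdd Q Q' hQ hQ' N) ⟨ℓ, w, i, hwl, hlN, rfl⟩)

set_option maxHeartbeats 1000000 in
theorem pAtom_difference_bound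
    {J : Type*} [Fintype J] [DecidableEq J] [Nonempty J]
    (Q Q' : ℕ → ℕ → Matrix J J ℝ)
    (hQ : ∀ ℓ w, w ≤ ℓ → RowSubstochastic (Q ℓ w))
    (hQ' : ∀ ℓ w, w ≤ ℓ → RowSubstochastic (Q' ℓ w))
    (γ : ℝ) (hγ : 0 < γ) (s : ℝ) (hs : 0 ≤ s) (i : J) (N : ℕ) :
    ∑ j, |pAtom γ (PiRec Q) s i j - pAtom γ (PiRec Q') s i j| ≤
      γ * s * Cconst Q Q' N + 2 * ∑' ℓ : ℕ, Poi (γ * s) (N + 1 + ℓ) := by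
  set lam := γ * s with hlamdef
  have hlam : 0 ≤ lam := mul_nonneg hγ.le hs
  set C := Cconst Q Q' N with hCdef
  have hC : 0 ≤ C := Cconst_nonneg Q Q' hQ hQ' N
  -- diagonal products
  set f : ℕ → ℝ := fun ℓ => ∏ k ∈ Finset.range ℓ, Q k k i i with hfdef
  set g : ℕ → ℝ := fun ℓ => ∏ k ∈ Finset.range ℓ, Q' k k i i with hgdef
  have ha0 : ∀ k, 0 ≤ Q k k i i := fun k => (hQ k k le_rfl).1 i i
  have hb0 : ∀ k, 0 ≤ Q' k k i i := fun k => (hQ' k k le_rfl).1 i i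
  have ha1 : ∀ k, Q k k i i ≤ 1 := fun k =>
    (Finset.single_le_sum (f := fun j => Q k k i j)
      (fun j _ => (hQ k k le_rfl).1 i j) (Finset.mem_univ i)).trans ((hQ k k le_rfl).2 i)
  have hb1 : ∀ k, Q' k k i i ≤ 1 := fun k =>
    (Finset.single_le_sum (f := fun j => Q' k k i j)
      (fun j _ => (hQ' k k le_rfl).1 i j) (Finset.mem_univ i)).trans ((hQ' k k le_rfl).2 i)
  have hf0 : ∀ ℓ, 0 ≤ f ℓ := fun ℓ => Finset.prod_nonneg fun k _ => ha0 k
  have hg0 : ∀ ℓ, 0 ≤ g ℓ := fun ℓ => Finset.prod_nonneg fun k _ => hb0 k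
  have hf1 : ∀ ℓ, f ℓ ≤ 1 := fun ℓ => Finset.prod_le_one (fun k _ => ha0 k) fun k _ => ha1 k
  have hg1 : ∀ ℓ, g ℓ ≤ 1 := fun ℓ => Finset.prod_le_one (fun k _ => hb0 k) fun k _ => hb1 k
  have hPiQ : ∀ ℓ, PiRec Q ℓ ℓ i i = f ℓ := fun ℓ => by
    rw [piRec_diag]; exact Matrix.diagonal_apply_eq _ i
  have hPiQ' : ∀ ℓ, PiRec Q' ℓ ℓ i i = g ℓ := fun ℓ => by
    rw [piRec_diag]; exact Matrix.diagonal_apply_eq _ i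
  -- the two series
  set F : ℕ → ℝ := fun ℓ => Poi lam ℓ * f ℓ with hFdef
  set G : ℕ → ℝ := fun ℓ => Poi lam ℓ * g ℓ with hGdef
  have hFs : Summable F := by
    refine (summable_Poi lam).of_nonneg_of_le
      (fun ℓ => mul_nonneg (Poi_nonneg hlam ℓ) (hf0 ℓ)) (fun ℓ => ?_)
    calc Poi lam ℓ * f ℓ ≤ Poi lam ℓ * 1 := by
          have := Poi_nonneg hlam ℓ; nlinarith [hf1 ℓ]
      _ = Poi lam ℓ := mul_one _
  have hGs : Summable G := by
    refine (summable_Poi lam).of_nonneg_of_le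
      (fun ℓ => mul_nonneg (Poi_nonneg hlam ℓ) (hg0 ℓ)) (fun ℓ => ?_)
    calc Poi lam ℓ * g ℓ ≤ Poi lam ℓ * 1 := by
          have := Poi_nonneg hlam ℓ; nlinarith [hg1 ℓ]
      _ = Poi lam ℓ := mul_one _
  set D : ℕ → ℝ := fun ℓ => Poi lam ℓ * |f ℓ - g ℓ| with hDdef
  have hDle : ∀ ℓ, D ℓ ≤ Poi lam ℓ := by
    intro ℓ
    have h1 : |f ℓ - g ℓ| ≤ 1 := abs_le.2 ⟨by linarith [hf0 ℓ, hg1 ℓ], by linarith [hf1 ℓ, hg0 ℓ]⟩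
    have h2 := Poi_nonneg hlam ℓ
    calc D ℓ = Poi lam ℓ * |f ℓ - g ℓ| := rfl
      _ ≤ Poi lam ℓ * 1 := by nlinarith
      _ = Poi lam ℓ := mul_one _
  have hD0 : ∀ ℓ, 0 ≤ D ℓ := fun ℓ => mul_nonneg (Poi_nonneg hlam ℓ) (abs_nonneg _)
  have hDs : Summable D := (summable_Poi lam).of_nonneg_of_le hD0 hDle
  -- reduce the sum over j
  have hsum : ∑ j, |pAtom γ (PiRec Q) s i j - pAtom γ (PiRec Q') s i j| =
      |(∑' ℓ, F ℓ) - ∑' ℓ, G ℓ| := by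
    have hterm : ∀ j, |pAtom γ (PiRec Q) s i j - pAtom γ (PiRec Q') s i j| =
        if i = j then |(∑' ℓ, F ℓ) - ∑' ℓ, G ℓ| else 0 := by
      intro j
      by_cases h : i = j
      · subst h
        simp only [pAtom, if_pos rfl, one_mul]
        have e1 : ∑' ℓ, Poi (γ * s) ℓ * PiRec Q ℓ ℓ i i = ∑' ℓ, F ℓ :=
          tsum_congr fun ℓ => by rw [hPiQ ℓ]
        have e2 : ∑' ℓ, Poi (γ * s) ℓ * PiRec Q' ℓ ℓ i i = ∑' ℓ, G ℓ :=
          tsum_congr fun ℓ => by rw [hPiQ' ℓ]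
        rw [e1, e2]
        simp
      · simp [pAtom, h]
    rw [Finset.sum_congr rfl fun j _ => hterm j]
    simp
  rw [hsum]
  -- bound the difference of the series
  have hdiff : |(∑' ℓ, F ℓ) - ∑' ℓ, G ℓ| ≤ ∑' ℓ, D ℓ := by
    rw [← Summable.tsum_sub hFs hGs]
    have habs : ∀ ℓ, |F ℓ - G ℓ| = D ℓ := fun ℓ => by
      rw [hFdef, hGdef, hDdef]
      simp only [← mul_sub, abs_mul, abs_of_nonneg (Poi_nonneg hlam ℓ)]
    calc |∑' ℓ, (F ℓ - G ℓ)| ≤ ∑' ℓ, |F ℓ - G ℓ| := by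
          have hsub : Summable fun ℓ => ‖F ℓ - G ℓ‖ := by
            simpa only [Real.norm_eq_abs] using (hFs.sub hGs).abs
          simpa only [Real.norm_eq_abs] using
            norm_tsum_le_tsum_norm (f := fun ℓ => F ℓ - G ℓ) hsub
      _ = ∑' ℓ, D ℓ := tsum_congr habs
  refine hdiff.trans ?_
  -- split the series at N+1
  rw [← Summable.sum_add_tsum_nat_add (N + 1) hDs]
  have hhead : ∑ ℓ ∈ Finset.range (N + 1), D ℓ ≤ lam * C := by
    have hstep : ∀ ℓ, ℓ ≤ N → D ℓ ≤ Poi lam ℓ * ℓ * C := by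
      intro ℓ hℓ
      have h1 : |f ℓ - g ℓ| ≤ ∑ k ∈ Finset.range ℓ, |Q k k i i - Q' k k i i| :=
        abs_prod_sub_prod _ _ ha0 ha1 hb0 hb1 ℓ
      have h2 : ∑ k ∈ Finset.range ℓ, |Q k k i i - Q' k k i i| ≤ ℓ * C := by
        calc ∑ k ∈ Finset.range ℓ, |Q k k i i - Q' k k i i|
            ≤ ∑ _k ∈ Finset.range ℓ, C := by
              apply Finset.sum_le_sum
              intro k hk
              exact le_Cconst Q Q' hQ hQ' i le_rfl
                (lt_of_lt_of_le (Finset.mem_range.1 hk) hℓ)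
          _ = ℓ * C := by rw [Finset.sum_const, Finset.card_range, nsmul_eq_mul]
      have h3 := Poi_nonneg hlam ℓ
      calc D ℓ = Poi lam ℓ * |f ℓ - g ℓ| := rfl
        _ ≤ Poi lam ℓ * (ℓ * C) := by nlinarith [h1.trans h2, abs_nonneg (f ℓ - g ℓ)]
        _ = Poi lam ℓ * ℓ * C := by ring
    calc ∑ ℓ ∈ Finset.range (N + 1), D ℓ
        ≤ ∑ ℓ ∈ Finset.range (N + 1), Poi lam ℓ * ℓ * C := by
          apply Finset.sum_le_sum
          intro ℓ hℓ
          exact hstep ℓ (Nat.lt_succ_iff.1 (Finset.mem_range.1 hℓ))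
      _ = (∑ ℓ ∈ Finset.range (N + 1), Poi lam ℓ * ℓ) * C := by rw [Finset.sum_mul]
      _ ≤ lam * C := by
          apply mul_le_mul_of_nonneg_right _ hC
          rw [Finset.sum_range_succ']
          simp only [Nat.cast_zero, mul_zero, add_zero, Nat.cast_add, Nat.cast_one]
          have : ∀ ℓ : ℕ, Poi lam (ℓ + 1) * ((ℓ : ℝ) + 1) = lam * Poi lam ℓ := by
            intro ℓ
            have := Poi_succ_mul lam ℓ
            push_cast at this ⊢
            linarith
          rw [Finset.sum_congr rfl fun ℓ _ => this ℓ, ← Finset.mul_sum]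
          have hsle : ∑ ℓ ∈ Finset.range N, Poi lam ℓ ≤ 1 := by
            calc ∑ ℓ ∈ Finset.range N, Poi lam ℓ ≤ ∑' ℓ, Poi lam ℓ :=
                  Summable.sum_le_tsum _ (fun ℓ _ => Poi_nonneg hlam ℓ) (summable_Poi lam)
              _ = 1 := tsum_Poi
          nlinarith
  have htail : ∑' ℓ, D (ℓ + (N + 1)) ≤ 2 * ∑' ℓ, Poi lam (N + 1 + ℓ) := by
    rw [← tsum_mul_left]
    refine Summable.tsum_le_tsum (fun ℓ => ?_) ((summable_nat_add_iff (N + 1)).2 hDs)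
      (Summable.mul_left 2 (((summable_nat_add_iff (N + 1)).2 (summable_Poi lam)).congr
        fun n => by rw [add_comm]))
    · calc D (ℓ + (N + 1)) ≤ Poi lam (ℓ + (N + 1)) := hDle _
        _ = Poi lam (N + 1 + ℓ) := by rw [add_comm]
        _ ≤ 2 * Poi lam (N + 1 + ℓ) := by
            have := Poi_nonneg hlam (N + 1 + ℓ); linarith
  linarith

end
end
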